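/- arXiv:2006.11711 — 4 statements merged into one kernel-verified Lean document; each statement's English description precedes it below -/
import Mathlib

section
/- If a directed graph G is (r + s - 1)-robust, then G is (r,s)-robust. -/
/-- In-neighbors of `i` lying outside the set `S`. -/
def inNbrsOutside {n : ℕ} (E : Fin n → Fin n → Prop) [DecidableRel E]
    (S : Finset (Fin n)) (i : Fin n) : Finset (Fin n) :=
  (Finset.univ \ S).filter (fun j => E j i)

/-- `X^r_S`: nodes of `S` with at least `r` in-neighbors outside `S`. -/
def reachSet {n : ℕ} (E : Fin n → Fin n → Prop) [DecidableRel E]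
    (r : ℕ) (S : Finset (Fin n)) : Finset (Fin n) :=
  S.filter (fun i => r ≤ (inNbrsOutside E S i).card)

/-- `(r,s)`-robustness of the directed graph with edge relation `E j i` = edge from j to i. -/
def robust {n : ℕ} (E : Fin n → Fin n → Prop) [DecidableRel E] (r s : ℕ) : Prop :=
  ∀ V1 V2 : Finset (Fin n), V1.Nonempty → V2.Nonempty → Disjoint V1 V2 →
    reachSet E r V1 = V1 ∨ reachSet E r V2 = V2 ∨
    s ≤ (reachSet E r V1).card + (reachSet E r V2).card

/-- In-degree of node `i`. -/
def inDeg {n : ℕ} (E : Fin n → Fin n → Prop) [DecidableRel E] (i : Fin n) : ℕ :=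
  (Finset.univ.filter (fun j => E j i)).card

lemma key {n : ℕ} (E : Fin n → Fin n → Prop) [DecidableRel E]
    (r s : ℕ) (hr : 1 ≤ r) (V : Finset (Fin n)) (i : Fin n)
    (hi : i ∈ V \ reachSet E r V)
    (hdeg : r + s - 1 ≤ (inNbrsOutside E (V \ reachSet E r V) i).card) :
    s ≤ (reachSet E r V).card := by
  set A := reachSet E r V with hA
  have hAV : A ⊆ V := Finset.filter_subset _ _
  have hiV : i ∈ V := (Finset.mem_sdiff.mp hi).1
  have hiA : i ∉ A := (Finset.mem_sdiff.mp hi).2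
  have hsmall : (inNbrsOutside E V i).card < r := by
    by_contra hc
    exact hiA (Finset.mem_filter.mpr ⟨hiV, not_lt.mp hc⟩)
  have hsub : inNbrsOutside E (V \ A) i ⊆
      inNbrsOutside E V i ∪ A.filter (fun j => E j i) := by
    intro j hj
    simp only [inNbrsOutside, Finset.mem_filter, Finset.mem_sdiff, Finset.mem_univ,
      true_and, Finset.mem_union] at hj ⊢
    rcases hj with ⟨hjV, hjE⟩
    by_cases hjA : j ∈ A
    · exact Or.inr ⟨hjA, hjE⟩
    · exact Or.inl ⟨fun hjV' => hjV ⟨hjV', hjA⟩, hjE⟩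
  have hcard : (inNbrsOutside E (V \ A) i).card ≤
      (inNbrsOutside E V i).card + (A.filter (fun j => E j i)).card :=
    le_trans (Finset.card_le_card hsub) (Finset.card_union_le _ _)
  have hfA : (A.filter (fun j => E j i)).card ≤ A.card := Finset.card_filter_le _ _
  omega

theorem stmt4 {n : ℕ} (E : Fin n → Fin n → Prop) [DecidableRel E]
    (r s : ℕ) (hr : 1 ≤ r) (hs : 1 ≤ s) (h : robust E (r + s - 1) 1) :
    robust E r s := by
  intro V1 V2 h1 h2 hd
  by_cases e1 : reachSet E r V1 = V1
  · exact Or.inl e1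
  by_cases e2 : reachSet E r V2 = V2
  · exact Or.inr (Or.inl e2)
  right; right
  set V1' := V1 \ reachSet E r V1 with hV1'
  set V2' := V2 \ reachSet E r V2 with hV2'
  have h1' : V1'.Nonempty := by
    rw [hV1', Finset.sdiff_nonempty]
    intro hsub
    exact e1 (Finset.Subset.antisymm (Finset.filter_subset _ _) hsub)
  have h2' : V2'.Nonempty := by
    rw [hV2', Finset.sdiff_nonempty]
    intro hsub
    exact e2 (Finset.Subset.antisymm (Finset.filter_subset _ _) hsub)
  have hd' : Disjoint V1' V2' :=
    Finset.disjoint_of_subset_left (Finset.sdiff_subset)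
      (Finset.disjoint_of_subset_right (Finset.sdiff_subset) hd)
  have hget : ∀ V : Finset (Fin n), reachSet E (r + s - 1) (V \ reachSet E r V) =
      V \ reachSet E r V ∨ 1 ≤ (reachSet E (r + s - 1) (V \ reachSet E r V)).card →
      (V \ reachSet E r V).Nonempty → s ≤ (reachSet E r V).card := by
    intro V hc hne
    have : ∃ i, i ∈ reachSet E (r + s - 1) (V \ reachSet E r V) := by
      rcases hc with hc | hc
      · obtain ⟨i, hi⟩ := hne
        exact ⟨i, hc.symm ▸ hi⟩
      · exact Finset.card_pos.mp hc
    obtain ⟨i, hi⟩ := this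
    obtain ⟨hiV, hideg⟩ := Finset.mem_filter.mp hi
    exact key E r s hr V i hiV hideg
  rcases h V1' V2' h1' h2' hd' with hc | hc | hc
  · have := hget V1 (Or.inl hc) h1'
    omega
  · have := hget V2 (Or.inl hc) h2'
    omega
  · rcases Nat.eq_zero_or_pos (reachSet E (r + s - 1) V1').card with hc1 | hc1
    · have hc2 : 1 ≤ (reachSet E (r + s - 1) V2').card := by omega
      have := hget V2 (Or.inr hc2) h2'
      omega
    · have := hget V1 (Or.inr hc1) h1'
      omega
end

section
/- Let G be a directed graph on n nodes and r a nonnegative integer. If every node i has in-degree |N_i| ≥ r + n/2, then G is (r,s)-robust for every nonnegative integer s. -/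
lemma full_of_small {n : ℕ} (E : Fin n → Fin n → Prop) [DecidableRel E] (r : ℕ)
    (hdeg : ∀ i : Fin n, (r : ℝ) + (n : ℝ) / 2 ≤ (inDeg E i : ℝ))
    (S : Finset (Fin n)) (hS : 2 * S.card ≤ n) : reachSet E r S = S := by
  apply Finset.filter_true_of_mem
  intro i _
  have h1 : inDeg E i ≤ (inNbrsOutside E S i).card + S.card := by
    have hsub : Finset.univ.filter (fun j => E j i) ⊆ (inNbrsOutside E S i) ∪ S := by
      intro j hj
      simp only [inNbrsOutside, Finset.mem_filter, Finset.mem_union, Finset.mem_sdiff,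
        Finset.mem_univ, true_and] at *
      tauto
    calc inDeg E i ≤ ((inNbrsOutside E S i) ∪ S).card := Finset.card_le_card hsub
      _ ≤ _ := Finset.card_union_le _ _
  have h2 : r + S.card ≤ inDeg E i := by
    have hd := hdeg i
    have hS' : (2 * S.card : ℝ) ≤ n := by exact_mod_cast hS
    have : ((r + S.card : ℕ) : ℝ) ≤ (inDeg E i : ℝ) := by push_cast; linarith
    exact_mod_cast this
  omega

theorem stmt5 {n : ℕ} (E : Fin n → Fin n → Prop) [DecidableRel E]
    (r : ℕ) (hdeg : ∀ i : Fin n, (r : ℝ) + (n : ℝ) / 2 ≤ (inDeg E i : ℝ)) :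
    ∀ s : ℕ, robust E r s := by
  intro s V1 V2 _ _ hdisj
  have hcard : V1.card + V2.card ≤ n := by
    have := Finset.card_le_card (Finset.subset_univ (V1 ∪ V2))
    rwa [Finset.card_union_of_disjoint hdisj, Finset.card_univ, Fintype.card_fin] at this
  rcases le_or_gt (2 * V1.card) n with h | h
  · exact Or.inl (full_of_small E r hdeg V1 h)
  · exact Or.inr (Or.inl (full_of_small E r hdeg V2 (by omega)))
end

section
/- Let n ≥ 2f+1 and consider a multiset of n real values consisting of the values of n agents, of which at most f are 'faulty' and may lie outside the interval [m, M] containing all non-faulty values. If an agent sorts all n values and deletes the f largest and f smallest, then every remaining value lies in [m, M]. -/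
theorem stmt11 {n f : ℕ} (hn : 2 * f + 1 ≤ n)
    (x : Fin n → ℝ) (F : Finset (Fin n)) (hF : F.card ≤ f)
    (m M : ℝ) (hmM : m ≤ M) (hgood : ∀ i, i ∉ F → x i ∈ Set.Icc m M)
    (σ : Equiv.Perm (Fin n)) (hσ : Antitone fun k => x (σ k)) :
    ∀ k : Fin n, f ≤ (k : ℕ) → (k : ℕ) < n - f → x (σ k) ∈ Set.Icc m M := by
  intro k hk1 hk2
  have hne : ∀ (S : Finset (Fin n)), f < S.card → ∃ j ∈ S, σ j ∉ F := by
    intro S hS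
    by_contra h
    push_neg at h
    have hsub : S.image σ ⊆ F := by
      intro i hi
      obtain ⟨j, hj, rfl⟩ := Finset.mem_image.mp hi
      exact h j hj
    have := Finset.card_le_card hsub
    rw [Finset.card_image_of_injective _ σ.injective] at this
    omega
  constructor
  · obtain ⟨j, hj, hjF⟩ := hne (Finset.Ici k) (by rw [Fin.card_Ici]; omega)
    exact le_trans (hgood _ hjF).1 (hσ (Finset.mem_Ici.mp hj))
  · obtain ⟨j, hj, hjF⟩ := hne (Finset.Iic k) (by rw [Fin.card_Iic]; omega)
    exact le_trans (hσ (Finset.mem_Iic.mp hj)) (hgood _ hjF).2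
end

section
/- Let n ≥ 4f+1 and consider a multiset of n real values of which at most 2f are faulty (may lie outside [m, M], the interval containing all non-faulty values). If the 2f largest and 2f smallest values are deleted, then every remaining value lies in [m, M], and at least one value remains. -/
theorem stmt12 {n f : ℕ} (hn : 4 * f + 1 ≤ n)
    (x : Fin n → ℝ) (F : Finset (Fin n)) (hF : F.card ≤ 2 * f)
    (m M : ℝ) (hmM : m ≤ M) (hgood : ∀ i, i ∉ F → x i ∈ Set.Icc m M)
    (σ : Equiv.Perm (Fin n)) (hσ : Antitone fun k => x (σ k)) :
    (∀ k : Fin n, 2 * f ≤ (k : ℕ) → (k : ℕ) < n - 2 * f → x (σ k) ∈ Set.Icc m M) ∧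
      2 * f < n - 2 * f := by
  refine ⟨?_, by omega⟩
  intro k hk1 hk2
  -- upper bound: some j ≤ k with σ j ∉ F
  have hub : ∃ j : Fin n, j ≤ k ∧ σ j ∉ F := by
    by_contra h
    push_neg at h
    have hsub : (Finset.Iic k).image σ ⊆ F := by
      intro i hi
      obtain ⟨j, hj, rfl⟩ := Finset.mem_image.1 hi
      exact h j (Finset.mem_Iic.1 hj)
    have := Finset.card_le_card hsub
    rw [Finset.card_image_of_injective _ σ.injective, Fin.card_Iic] at this
    omega
  have hlb : ∃ j : Fin n, k ≤ j ∧ σ j ∉ F := by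
    by_contra h
    push_neg at h
    have hsub : (Finset.Ici k).image σ ⊆ F := by
      intro i hi
      obtain ⟨j, hj, rfl⟩ := Finset.mem_image.1 hi
      exact h j (Finset.mem_Ici.1 hj)
    have := Finset.card_le_card hsub
    rw [Finset.card_image_of_injective _ σ.injective, Fin.card_Ici] at this
    omega
  obtain ⟨j1, hj1, hj1F⟩ := hub
  obtain ⟨j2, hj2, hj2F⟩ := hlb
  exact ⟨le_trans (hgood _ hj2F).1 (hσ hj2),
         le_trans (hσ hj1) (hgood _ hj1F).2⟩
end
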